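/- arXiv:2105.05579 — 3 statements merged into one kernel-verified Lean document; each statement's English description precedes it below -/
import Mathlib

section
/- Let d ≥ 2 and λ < 0. Then there exists a constant C > 0 such that for every measurable function g : ℝ^{d-1} → ℂ one has ∫_{ℝ^{d-1}} ∫_ℝ (1 + |k|² + t²) · |g(k)|² / (|k|² + t² − λ)² dt dk ≤ C · ∫_{ℝ^{d-1}} (1 + |k|²)^{−1/2} · |g(k)|² dk, where both sides are interpreted as (possibly infinite) integrals of nonnegative functions. -/
/-!
With `c := min 1 (-λ)` one has `c (1 + s) ≤ s - λ` for all `s ≥ 0`, so the `t`-integrand is at most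
`c⁻¹ |g k|² / (c (1 + |k|²) + t²)`. Its `t`-integral is `π |g k|² / (c^{3/2} (1 + |k|²)^{1/2})` by
`∫ (m + t²)⁻¹ dt = π / √m`, and integrating in `k` gives the bound with `C = π / c^{3/2}`.
-/

open MeasureTheory Real

lemma inv_add_sq_eq_of_pos {m : ℝ} (hm : 0 < m) (t : ℝ) :
    (m + t ^ 2)⁻¹ = m⁻¹ * (1 + ((√m)⁻¹ * t) ^ 2)⁻¹ := by
  have hs : √m ^ 2 = m := sq_sqrt hm.le
  rw [← mul_inv, mul_pow, inv_pow, hs]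
  field_simp

lemma integrable_inv_add_sq {m : ℝ} (hm : 0 < m) :
    Integrable fun t : ℝ ↦ (m + t ^ 2)⁻¹ := by
  simp_rw [inv_add_sq_eq_of_pos hm]
  exact (integrable_inv_one_add_sq.comp_mul_left' (by positivity)).const_mul _

lemma integral_inv_add_sq {m : ℝ} (hm : 0 < m) :
    ∫ t : ℝ, (m + t ^ 2)⁻¹ = π / √m := by
  simp_rw [inv_add_sq_eq_of_pos hm]
  rw [integral_const_mul, Measure.integral_comp_mul_left (fun x ↦ (1 + x ^ 2)⁻¹),
    integral_univ_inv_one_add_sq, inv_inv, abs_of_pos (sqrt_pos.mpr hm), smul_eq_mul]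
  field_simp
  exact sq_sqrt hm.le

lemma lintegral_ofReal_inv_add_sq {m : ℝ} (hm : 0 < m) :
    ∫⁻ t : ℝ, ENNReal.ofReal (m + t ^ 2)⁻¹ = ENNReal.ofReal (π / √m) := by
  rw [← integral_inv_add_sq hm, ofReal_integral_eq_lintegral_ofReal (integrable_inv_add_sq hm)
    (.of_forall fun t ↦ by positivity)]

lemma div_sq_le_inv_mul_inv {c a lam t : ℝ} (hc : 0 < c) (hc1 : c ≤ 1) (hclam : c ≤ -lam)
    (ha : 0 ≤ a) :
    (1 + a + t ^ 2) / (a + t ^ 2 - lam) ^ 2 ≤ c⁻¹ * (c * (1 + a) + t ^ 2)⁻¹ := by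
  -- each factor of `(a + t ^ 2 - lam) ^ 2` dominates one factor of the inverted right-hand side
  have ht := sq_nonneg t
  have h1 : c * (1 + a + t ^ 2) ≤ a + t ^ 2 - lam := by nlinarith
  have h2 : c * (1 + a) + t ^ 2 ≤ a + t ^ 2 - lam := by nlinarith
  rw [← mul_inv, div_le_iff₀ (by nlinarith), ← div_eq_inv_mul, le_div_iff₀ (by positivity)]
  calc (1 + a + t ^ 2) * (c * (c * (1 + a) + t ^ 2))
      = c * (1 + a + t ^ 2) * (c * (1 + a) + t ^ 2) := by ring
    _ ≤ (a + t ^ 2 - lam) * (a + t ^ 2 - lam) := mul_le_mul h1 h2 (by positivity) (by linarith)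
    _ = (a + t ^ 2 - lam) ^ 2 := (sq _).symm

lemma lintegral_div_sq_le {c a lam : ℝ} (hc : 0 < c) (hc1 : c ≤ 1) (hclam : c ≤ -lam)
    (ha : 0 ≤ a) :
    ∫⁻ t : ℝ, ENNReal.ofReal ((1 + a + t ^ 2) / (a + t ^ 2 - lam) ^ 2)
      ≤ ENNReal.ofReal (π / (c * √c) * (1 + a) ^ (-(1 : ℝ) / 2)) := by
  have h1a : 0 < 1 + a := by positivity
  calc ∫⁻ t : ℝ, ENNReal.ofReal ((1 + a + t ^ 2) / (a + t ^ 2 - lam) ^ 2)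
      ≤ ∫⁻ t : ℝ, ENNReal.ofReal c⁻¹ * ENNReal.ofReal (c * (1 + a) + t ^ 2)⁻¹ :=
        lintegral_mono fun t ↦ by
          rw [← ENNReal.ofReal_mul (by positivity)]
          exact ENNReal.ofReal_le_ofReal (div_sq_le_inv_mul_inv hc hc1 hclam ha)
    _ = ENNReal.ofReal c⁻¹ * ENNReal.ofReal (π / √(c * (1 + a))) := by
        rw [lintegral_const_mul' _ _ ENNReal.ofReal_ne_top,
          lintegral_ofReal_inv_add_sq (by positivity)]
    _ = ENNReal.ofReal (π / (c * √c) * (1 + a) ^ (-(1 : ℝ) / 2)) := by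
        rw [← ENNReal.ofReal_mul (by positivity), neg_div, rpow_neg h1a.le, ← sqrt_eq_rpow,
          sqrt_mul hc.le]
        congr 1
        field_simp

theorem poisson_operator_bounded_general (d : ℕ) (lam : ℝ) (hlam : lam < 0) :
    ∃ C > 0, ∀ g : EuclideanSpace ℝ (Fin (d - 1)) → ℂ, Measurable g →
      ∫⁻ k : EuclideanSpace ℝ (Fin (d - 1)), ∫⁻ t : ℝ,
          ENNReal.ofReal ((1 + ‖k‖ ^ 2 + t ^ 2) * ‖g k‖ ^ 2 / (‖k‖ ^ 2 + t ^ 2 - lam) ^ 2)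
        ≤ ENNReal.ofReal C *
          ∫⁻ k : EuclideanSpace ℝ (Fin (d - 1)),
            ENNReal.ofReal ((1 + ‖k‖ ^ 2) ^ (-(1 : ℝ) / 2) * ‖g k‖ ^ 2) := by
  set c := min 1 (-lam)
  have hc : 0 < c := lt_min one_pos (neg_pos.mpr hlam)
  refine ⟨π / (c * √c), by positivity, fun g _ ↦ ?_⟩
  calc ∫⁻ k, ∫⁻ t : ℝ,
          ENNReal.ofReal ((1 + ‖k‖ ^ 2 + t ^ 2) * ‖g k‖ ^ 2 / (‖k‖ ^ 2 + t ^ 2 - lam) ^ 2)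
      = ∫⁻ k, (∫⁻ t : ℝ, ENNReal.ofReal ((1 + ‖k‖ ^ 2 + t ^ 2) / (‖k‖ ^ 2 + t ^ 2 - lam) ^ 2))
          * ENNReal.ofReal (‖g k‖ ^ 2) := by
        refine lintegral_congr fun k ↦ ?_
        simp_rw [mul_div_right_comm _ (‖g k‖ ^ 2), ENNReal.ofReal_mul' (sq_nonneg ‖g k‖)]
        exact lintegral_mul_const' _ _ ENNReal.ofReal_ne_top
    _ ≤ ∫⁻ k, ENNReal.ofReal (π / (c * √c) * (1 + ‖k‖ ^ 2) ^ (-(1 : ℝ) / 2))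
          * ENNReal.ofReal (‖g k‖ ^ 2) :=
        lintegral_mono fun k ↦ mul_le_mul_left
          (lintegral_div_sq_le hc (min_le_left _ _) (min_le_right _ _) (sq_nonneg _)) _
    _ = ENNReal.ofReal (π / (c * √c)) *
          ∫⁻ k, ENNReal.ofReal ((1 + ‖k‖ ^ 2) ^ (-(1 : ℝ) / 2) * ‖g k‖ ^ 2) := by
        rw [← lintegral_const_mul' _ _ ENNReal.ofReal_ne_top]
        simp_rw [← ENNReal.ofReal_mul (by positivity : (0 : ℝ) ≤ π / (c * √c)),
          ← ENNReal.ofReal_mul' (sq_nonneg _), mul_assoc]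

/-- for `d ≥ 2` and `λ < 0` there is a constant `C > 0` such that for every
measurable `g : ℝ^{d-1} → ℂ` the weighted-integral inequality
`∫∫ (1+|k|²+t²)|g(k)|²/(|k|²+t²−λ)² dt dk ≤ C ∫ (1+|k|²)^{-1/2}|g(k)|² dk`
holds, both sides interpreted as (possibly infinite) integrals of nonnegative functions. -/
theorem poisson_operator_bounded (d : ℕ) (hd : 2 ≤ d) (lam : ℝ) (hlam : lam < 0) :
    ∃ C > 0, ∀ g : EuclideanSpace ℝ (Fin (d - 1)) → ℂ, Measurable g →
      ∫⁻ k : EuclideanSpace ℝ (Fin (d - 1)), ∫⁻ t : ℝ,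
          ENNReal.ofReal ((1 + ‖k‖ ^ 2 + t ^ 2) * ‖g k‖ ^ 2 / (‖k‖ ^ 2 + t ^ 2 - lam) ^ 2)
        ≤ ENNReal.ofReal C *
          ∫⁻ k : EuclideanSpace ℝ (Fin (d - 1)),
            ENNReal.ofReal ((1 + ‖k‖ ^ 2) ^ (-(1 : ℝ) / 2) * ‖g k‖ ^ 2) :=
  poisson_operator_bounded_general d lam hlam
end

section
/- Let d ≥ 2, λ < 0, and let φ : ℝ^{d-1} → ℂ be a Schwartz function. Define m : ℝ^{d-1} × ℝ → ℂ by m(k,t) := (𝓕_{d-1} φ)(k) / (4π²(|k|² + t²) − λ). Then m is integrable on ℝ^d, the function k ↦ (𝓕_{d-1} φ)(k) / (2·√(4π²|k|² − λ)) is integrable on ℝ^{d-1}, and for every x ∈ ℝ^{d-1} one has (𝓕_d^{-1} m)(x, 0) = 𝓕_{d-1}^{-1}[ k ↦ (𝓕_{d-1} φ)(k) / (2·√(4π²|k|² − λ)) ](x). -/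
open MeasureTheory Real
open scoped FourierTransform

/-- The inverse Fourier transform on the product space `ℝ^{d-1} × ℝ` (with its product
Lebesgue measure and the natural inner product `⟪x,k⟫ + s·t` of the orthogonal direct
sum), with Mathlib's kernel convention `e^{+2πi⟨z,p⟩}`. -/
noncomputable def fourierTransformInvProd {n : ℕ}
    (v : (EuclideanSpace ℝ (Fin n)) × ℝ → ℂ) :
    (EuclideanSpace ℝ (Fin n)) × ℝ → ℂ :=
  fun p => ∫ z : (EuclideanSpace ℝ (Fin n)) × ℝ,
    Complex.exp (((2 * π * ((inner ℝ z.1 p.1 : ℝ) + z.2 * p.2) : ℝ) : ℂ) * Complex.I) * v z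

/-! The integrand factors as `m(k,t) = 𝓕φ(k) · (a_k + 4π²t²)⁻¹` with `a_k = 4π²|k|² − λ ≥ −λ > 0`,
so `|m(k,t)| ≤ |𝓕φ(k)| · (−λ + 4π²t²)⁻¹`, an integrable product. At `t = 0` the kernel of `𝓕_d⁻¹`
no longer depends on the last variable, so by Fubini `(𝓕_d⁻¹ m)(x,0)` is the `(d-1)`-dimensional
inverse transform of `k ↦ ∫ m(k,t) dt`, and `∫ (a + 4π²t²)⁻¹ dt = π / √(4π²a) = 1 / (2√a)`. -/

theorem inv_add_mul_sq_eq {a b : ℝ} (ha : 0 < a) (hb : 0 < b) (t : ℝ) :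
    (a + b * t ^ 2)⁻¹ = a⁻¹ * (1 + (√(b / a) * t) ^ 2)⁻¹ := by
  rw [mul_pow, sq_sqrt (div_pos hb ha).le, ← mul_inv]
  field_simp

theorem integrable_inv_add_mul_sq {a b : ℝ} (ha : 0 < a) (hb : 0 < b) :
    Integrable fun t : ℝ => (a + b * t ^ 2)⁻¹ := by
  simp_rw [inv_add_mul_sq_eq ha hb]
  exact (integrable_inv_one_add_sq.comp_mul_left' (sqrt_pos.2 (div_pos hb ha)).ne').const_mul _

theorem integral_inv_add_mul_sq {a b : ℝ} (ha : 0 < a) (hb : 0 < b) :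
    ∫ t : ℝ, (a + b * t ^ 2)⁻¹ = π / √(a * b) := by
  have hs : 0 < √(b / a) := sqrt_pos.2 (div_pos hb ha)
  simp_rw [inv_add_mul_sq_eq ha hb]
  rw [integral_const_mul, Measure.integral_comp_mul_left (fun s : ℝ => (1 + s ^ 2)⁻¹),
    integral_univ_inv_one_add_sq, smul_eq_mul, abs_of_pos (inv_pos.2 hs), sqrt_div' _ ha.le,
    sqrt_mul ha.le]
  have := sqrt_pos.2 ha
  field_simp
  exact sq_sqrt ha.le

theorem integral_inv_add_four_pi_sq_mul_sq {a : ℝ} (ha : 0 < a) :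
    ∫ t : ℝ, (a + 4 * π ^ 2 * t ^ 2)⁻¹ = (2 * √a)⁻¹ := by
  rw [integral_inv_add_mul_sq ha (by positivity), sqrt_mul ha.le,
    show 4 * π ^ 2 = (2 * π) ^ 2 by ring, sqrt_sq (by positivity)]
  have := pi_pos
  field_simp

theorem integral_div_helmholtz_symbol (c : ℂ) (r : ℝ) {lam : ℝ} (hlam : lam < 0) :
    ∫ t : ℝ, c / ((4 * π ^ 2 * (r ^ 2 + t ^ 2) - lam : ℝ) : ℂ) =
      c / ((2 * √(4 * π ^ 2 * r ^ 2 - lam) : ℝ) : ℂ) := by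
  have ha : 0 < 4 * π ^ 2 * r ^ 2 - lam := by nlinarith [sq_nonneg (π * r)]
  simp_rw [div_eq_mul_inv, ← Complex.ofReal_inv,
    show ∀ t : ℝ, 4 * π ^ 2 * (r ^ 2 + t ^ 2) - lam = (4 * π ^ 2 * r ^ 2 - lam) + 4 * π ^ 2 * t ^ 2
      from fun t => by ring]
  rw [integral_const_mul, integral_complex_ofReal, integral_inv_add_four_pi_sq_mul_sq ha]

section

variable {E : Type*} [NormedAddCommGroup E] [MeasurableSpace E] [OpensMeasurableSpace E]
  {μ : Measure E} {f : E → ℂ} {lam : ℝ}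

theorem integrable_div_two_sqrt_helmholtz_symbol (hf : Integrable f μ) (hlam : lam < 0) :
    Integrable (fun k => f k / ((2 * √(4 * π ^ 2 * ‖k‖ ^ 2 - lam) : ℝ) : ℂ)) μ := by
  refine (hf.norm.const_mul (2 * √(-lam))⁻¹).mono' ?_ (.of_forall fun k => ?_)
  · exact hf.1.div₀ (by fun_prop)
  · have hle : √(-lam) ≤ √(4 * π ^ 2 * ‖k‖ ^ 2 - lam) :=
      sqrt_le_sqrt (by nlinarith [sq_nonneg (π * ‖k‖)])
    have := sqrt_pos.2 (neg_pos.2 hlam)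
    rw [norm_div, Complex.norm_real, norm_of_nonneg (by positivity), div_eq_mul_inv, mul_comm]
    gcongr

theorem integrable_div_helmholtz_symbol [SFinite μ] (hf : Integrable f μ) (hlam : lam < 0) :
    Integrable (fun p : E × ℝ => f p.1 / ((4 * π ^ 2 * (‖p.1‖ ^ 2 + p.2 ^ 2) - lam : ℝ) : ℂ))
      (μ.prod volume) := by
  have hg := integrable_inv_add_mul_sq (neg_pos.2 hlam) (by positivity : 0 < 4 * π ^ 2)
  refine (hf.norm.mul_prod hg).mono' ?_ (.of_forall fun p => ?_)
  · exact hf.1.comp_fst.div₀ (by fun_prop)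
  · have hle : -lam + 4 * π ^ 2 * p.2 ^ 2 ≤ 4 * π ^ 2 * (‖p.1‖ ^ 2 + p.2 ^ 2) - lam := by
      nlinarith [sq_nonneg (π * ‖p.1‖)]
    have : 0 < -lam + 4 * π ^ 2 * p.2 ^ 2 := by nlinarith [sq_nonneg (π * p.2)]
    rw [norm_div, Complex.norm_real, norm_of_nonneg (by linarith), div_eq_mul_inv]
    gcongr

end

theorem fourierTransformInvProd_apply_zero {n : ℕ} {v : EuclideanSpace ℝ (Fin n) × ℝ → ℂ}
    (hv : Integrable v) (x : EuclideanSpace ℝ (Fin n)) :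
    fourierTransformInvProd v (x, 0) = 𝓕⁻ (fun k => ∫ t, v (k, t)) x := by
  have hint : Integrable (fun z : EuclideanSpace ℝ (Fin n) × ℝ =>
      Complex.exp (((2 * π * inner ℝ z.1 x : ℝ) : ℂ) * Complex.I) * v z) (volume.prod volume) :=
    hv.bdd_mul (c := 1) (by fun_prop)
      (.of_forall fun z => (Complex.norm_exp_ofReal_mul_I _).le)
  simp only [fourierTransformInvProd, mul_zero, add_zero]
  rw [Measure.volume_eq_prod, integral_prod _ hint, Real.fourierInv_eq']
  simp_rw [integral_const_mul, smul_eq_mul]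

theorem poisson_trace_formula_general (d : ℕ) (lam : ℝ) (hlam : lam < 0)
    (φ : SchwartzMap (EuclideanSpace ℝ (Fin (d - 1))) ℂ) :
    Integrable (fun p : (EuclideanSpace ℝ (Fin (d - 1))) × ℝ =>
        𝓕 (φ : EuclideanSpace ℝ (Fin (d - 1)) → ℂ) p.1 /
          (((4 * π ^ 2 * (‖p.1‖ ^ 2 + p.2 ^ 2) - lam : ℝ) : ℂ))) ∧
      Integrable (fun k : EuclideanSpace ℝ (Fin (d - 1)) =>
        𝓕 (φ : EuclideanSpace ℝ (Fin (d - 1)) → ℂ) k /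
          (((2 * Real.sqrt (4 * π ^ 2 * ‖k‖ ^ 2 - lam) : ℝ) : ℂ))) ∧
      ∀ x : EuclideanSpace ℝ (Fin (d - 1)),
        fourierTransformInvProd (fun p : (EuclideanSpace ℝ (Fin (d - 1))) × ℝ =>
            𝓕 (φ : EuclideanSpace ℝ (Fin (d - 1)) → ℂ) p.1 /
              (((4 * π ^ 2 * (‖p.1‖ ^ 2 + p.2 ^ 2) - lam : ℝ) : ℂ))) (x, 0)
          = 𝓕⁻ (fun k : EuclideanSpace ℝ (Fin (d - 1)) =>
              𝓕 (φ : EuclideanSpace ℝ (Fin (d - 1)) → ℂ) k /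
                (((2 * Real.sqrt (4 * π ^ 2 * ‖k‖ ^ 2 - lam) : ℝ) : ℂ))) x := by
  have hf : Integrable (𝓕 (φ : EuclideanSpace ℝ (Fin (d - 1)) → ℂ)) :=
    SchwartzMap.fourier_coe φ ▸ (𝓕 φ).integrable
  have hm := integrable_div_helmholtz_symbol hf hlam
  rw [← Measure.volume_eq_prod] at hm
  refine ⟨hm, integrable_div_two_sqrt_helmholtz_symbol hf hlam, fun x => ?_⟩
  rw [fourierTransformInvProd_apply_zero hm]
  simp_rw [integral_div_helmholtz_symbol _ _ hlam]

/-- for `d ≥ 2`, `λ < 0` and a Schwartz function `φ` on `ℝ^{d-1}`, the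
function `m(k,t) = 𝓕φ(k)/(4π²(|k|²+t²) − λ)` is integrable on `ℝ^d`, the function
`k ↦ 𝓕φ(k)/(2√(4π²|k|² − λ))` is integrable on `ℝ^{d-1}`, and the trace of `𝓕⁻¹m` on
the hyperplane `{x_d = 0}` equals the inverse Fourier transform of the latter function:
the Fourier-space form of the trace formula `τ_D γ(λ) = (1/2)(−Δ−λ)^{−1/2}`. -/
theorem poisson_trace_formula (d : ℕ) (hd : 2 ≤ d) (lam : ℝ) (hlam : lam < 0)
    (φ : SchwartzMap (EuclideanSpace ℝ (Fin (d - 1))) ℂ) :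
    Integrable (fun p : (EuclideanSpace ℝ (Fin (d - 1))) × ℝ =>
        𝓕 (φ : EuclideanSpace ℝ (Fin (d - 1)) → ℂ) p.1 /
          (((4 * π ^ 2 * (‖p.1‖ ^ 2 + p.2 ^ 2) - lam : ℝ) : ℂ))) ∧
      Integrable (fun k : EuclideanSpace ℝ (Fin (d - 1)) =>
        𝓕 (φ : EuclideanSpace ℝ (Fin (d - 1)) → ℂ) k /
          (((2 * Real.sqrt (4 * π ^ 2 * ‖k‖ ^ 2 - lam) : ℝ) : ℂ))) ∧
      ∀ x : EuclideanSpace ℝ (Fin (d - 1)),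
        fourierTransformInvProd (fun p : (EuclideanSpace ℝ (Fin (d - 1))) × ℝ =>
            𝓕 (φ : EuclideanSpace ℝ (Fin (d - 1)) → ℂ) p.1 /
              (((4 * π ^ 2 * (‖p.1‖ ^ 2 + p.2 ^ 2) - lam : ℝ) : ℂ))) (x, 0)
          = 𝓕⁻ (fun k : EuclideanSpace ℝ (Fin (d - 1)) =>
              𝓕 (φ : EuclideanSpace ℝ (Fin (d - 1)) → ℂ) k /
                (((2 * Real.sqrt (4 * π ^ 2 * ‖k‖ ^ 2 - lam) : ℝ) : ℂ))) x :=
  poisson_trace_formula_general d lam hlam φ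
end

section
/- Let m ≥ 1 and for t > 0 let φ_t : ℝ^m → ℝ denote the heat kernel φ_t(x) := (4πt)^{−m/2} e^{−|x|²/(4t)}. Then there exists a constant c > 0 (independent of φ and t) such that for every Schwartz function φ : ℝ^m → ℂ and every t > 0 one has ‖φ − φ_t * φ‖²_{L²(ℝ^m)} ≤ c² · √t · ∫_{ℝ^m} (1 + |k|²)^{1/2} · |(𝓕_m φ)(k)|² dk. -/
/-!
On the Fourier side, convolution with the heat kernel `φ_t` is multiplication by
`e^{-4π²t|k|²}`, so by Plancherel `‖φ - φ_t * φ‖₂² = ∫ (1 - e^{-4π²t|k|²})² |𝓕φ(k)|² dk`.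
For `s ≥ 0` one has `(1 - e^{-s})² ≤ min(1, s) ≤ √s`, and with `s = 4π²t|k|²` this bounds the
multiplier by `2π√t |k| ≤ 2π√t (1 + |k|²)^{1/2}`; hence `c = √(2π)` works.
-/

open MeasureTheory Real
open scoped FourierTransform ENNReal

section Fourier

variable {V : Type*} [NormedAddCommGroup V] [InnerProductSpace ℝ V] [FiniteDimensional ℝ V]
  [MeasurableSpace V] [BorelSpace V]
  {E : Type*} [NormedAddCommGroup E] [NormedSpace ℂ E]
  {H : Type*} [NormedAddCommGroup H] [InnerProductSpace ℂ H] [CompleteSpace H]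

theorem Real.fourier_sub {f g : V → E} (hf : Integrable f) (hg : Integrable g) (ξ : V) :
    𝓕 (f - g) ξ = 𝓕 f ξ - 𝓕 g ξ := by
  simp only [Real.fourier_eq, Pi.sub_apply, smul_sub]
  exact integral_sub ((Real.fourierIntegral_convergent_iff ξ).2 hf)
    ((Real.fourierIntegral_convergent_iff ξ).2 hg)

theorem norm_le_integral_norm_fourier [CompleteSpace E] {f : V → E} (hc : Continuous f)
    (hf : Integrable f) (hf' : Integrable (𝓕 f)) (x : V) : ‖f x‖ ≤ ∫ ξ, ‖𝓕 f ξ‖ := by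
  rw [← hf.fourierInv_fourier_eq hf' hc.continuousAt, Real.fourierInv_eq_fourier_neg]
  exact VectorFourier.norm_fourierIntegral_le_integral_norm _ _ _ _ _

theorem integrable_norm_sq_of_integrable_fourier [CompleteSpace E] {f : V → E}
    (hc : Continuous f) (hf : Integrable f) (hf' : Integrable (𝓕 f)) :
    Integrable (fun x ↦ ‖f x‖ ^ 2) := by
  refine (hf.norm.const_mul (∫ ξ, ‖𝓕 f ξ‖)).mono' (hc.norm.pow 2).aestronglyMeasurable ?_
  filter_upwards with x
  rw [norm_pow, norm_norm, sq]
  exact mul_le_mul_of_nonneg_right (norm_le_integral_norm_fourier hc hf hf' x) (norm_nonneg _)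

theorem integral_norm_sq_fourier_eq {f : V → H} (hc : Continuous f) (hf : Integrable f)
    (hf' : Integrable (𝓕 f)) : ∫ ξ, ‖𝓕 f ξ‖ ^ 2 = ∫ x, ‖f x‖ ^ 2 := by
  -- Parseval `∫ ⟪𝓕 f, g⟫ = ∫ ⟪f, 𝓕⁻ g⟫` with `g = 𝓕 f`, then Fourier inversion.
  have h := VectorFourier.integral_sesq_fourierIntegral_eq_neg_flip (innerSL ℂ)
    (L := innerₗ V) continuous_fourierChar continuous_inner hf hf'
  have hinv : VectorFourier.fourierIntegral 𝐞 volume (-(innerₗ V).flip) (𝓕 f) = 𝓕⁻ (𝓕 f) := by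
    ext x; simp [Real.fourierInv_eq, VectorFourier.fourierIntegral, real_inner_comm]
  rw [hinv, hc.fourierInv_fourier_eq hf hf'] at h
  change ∫ ξ, innerSL ℂ (𝓕 f ξ) (𝓕 f ξ) = _ at h
  apply Complex.ofRealLI.injective
  simpa [← LinearIsometry.integral_comp_comm, inner_self_eq_norm_sq_to_K] using h

theorem lintegral_enorm_sq_eq_integral_norm_sq_fourier {f : V → H} (hc : Continuous f)
    (hf : Integrable f) (hf' : Integrable (𝓕 f)) :
    ∫⁻ x, ‖f x‖ₑ ^ 2 = ENNReal.ofReal (∫ ξ, ‖𝓕 f ξ‖ ^ 2) := by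
  rw [integral_norm_sq_fourier_eq hc hf hf', ofReal_integral_eq_lintegral_ofReal
    (integrable_norm_sq_of_integrable_fourier hc hf hf') (.of_forall fun x ↦ sq_nonneg _)]
  simp_rw [ENNReal.ofReal_pow (norm_nonneg _), ofReal_norm]

end Fourier

section HeatKernel

open Convolution ContinuousLinearMap

variable {V : Type*} [NormedAddCommGroup V] [InnerProductSpace ℝ V] {t : ℝ}

noncomputable def heatKernel (t : ℝ) (x : V) : ℝ :=
  (4 * π * t) ^ (-(Module.finrank ℝ V : ℝ) / 2) * rexp (-‖x‖ ^ 2 / (4 * t))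

theorem ofReal_heatKernel (x : V) :
    (heatKernel t x : ℂ) =
      ((4 * π * t) ^ (-(Module.finrank ℝ V : ℝ) / 2) : ℝ) *
        Complex.exp (-(4 * t : ℂ)⁻¹ * ‖x‖ ^ 2) := by
  rw [heatKernel, Complex.ofReal_mul, Complex.ofReal_exp]
  push_cast
  ring_nf

variable [FiniteDimensional ℝ V] [MeasurableSpace V] [BorelSpace V]

theorem integrable_ofReal_heatKernel (ht : 0 < t) :
    Integrable fun x : V ↦ (heatKernel t x : ℂ) := by
  simp_rw [ofReal_heatKernel]
  refine Integrable.const_mul ?_ _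
  simpa using GaussianFourier.integrable_cexp_neg_mul_sq_norm_add
    (b := (4 * t : ℂ)⁻¹) (by norm_num [ht]) 0 (0 : V)

theorem integrable_heatKernel (ht : 0 < t) : Integrable (heatKernel t : V → ℝ) := by
  simpa using (integrable_ofReal_heatKernel ht).re

theorem fourier_heatKernel (ht : 0 < t) (ξ : V) :
    𝓕 (fun x : V ↦ (heatKernel t x : ℂ)) ξ = rexp (-4 * π ^ 2 * t * ‖ξ‖ ^ 2) := by
  have h4πt : 0 < 4 * π * t := by positivity
  have hb : 0 < ((4 * t : ℂ)⁻¹).re := by norm_num [ht]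
  set G : V → ℂ := fun x ↦ Complex.exp (-(4 * t : ℂ)⁻¹ * ‖x‖ ^ 2)
  have hK : (fun x : V ↦ (heatKernel t x : ℂ)) =
      ((4 * π * t : ℝ) : ℂ) ^ (-(Module.finrank ℝ V : ℂ) / 2) • G := by
    ext x
    rw [ofReal_heatKernel, Complex.ofReal_cpow h4πt.le]
    push_cast; rfl
  have hπb : (π : ℂ) / (4 * t : ℂ)⁻¹ = ((4 * π * t : ℝ) : ℂ) := by push_cast; field_simp
  rw [hK, show 𝓕 (_ • G) = _ • 𝓕 G from VectorFourier.fourierIntegral_const_smul _ _ _ _ _,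
    Pi.smul_apply, fourier_gaussian_innerProductSpace hb, hπb, smul_eq_mul, ← mul_assoc,
    ← Complex.cpow_add _ _ (by exact_mod_cast h4πt.ne'), neg_div, neg_add_cancel,
    Complex.cpow_zero, one_mul]
  push_cast
  congr 1
  field_simp

variable {E : Type*} [NormedAddCommGroup E] [NormedSpace ℂ E]

theorem heatKernel_convolution_eq (f : V → E) :
    heatKernel t ⋆[lsmul ℝ ℝ] f = (fun x ↦ (heatKernel t x : ℂ)) ⋆[lsmul ℂ ℂ] f := by
  ext x
  simp [convolution]

theorem fourier_heatKernel_convolution [CompleteSpace E] (ht : 0 < t) {f : V → E}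
    (hf : Integrable f) (ξ : V) :
    𝓕 (heatKernel t ⋆[lsmul ℝ ℝ] f) ξ = rexp (-4 * π ^ 2 * t * ‖ξ‖ ^ 2) • 𝓕 f ξ := by
  rw [heatKernel_convolution_eq,
    Real.fourier_smul_convolution_eq (integrable_ofReal_heatKernel ht) hf, fourier_heatKernel ht,
    Complex.coe_smul]

end HeatKernel

theorem sq_one_sub_exp_neg_le_sqrt {s : ℝ} (hs : 0 ≤ s) : (1 - rexp (-s)) ^ 2 ≤ √s := by
  have h0 : 0 ≤ 1 - rexp (-s) := by linarith [exp_le_one_iff.mpr (neg_nonpos.mpr hs)]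
  have h1 : 1 - rexp (-s) ≤ 1 := by linarith [exp_pos (-s)]
  have hs' : 1 - rexp (-s) ≤ s := by linarith [add_one_le_exp (-s)]
  calc (1 - rexp (-s)) ^ 2 ≤ 1 - rexp (-s) := by nlinarith
    _ ≤ √s := le_sqrt_of_sq_le (by nlinarith)

theorem sq_one_sub_exp_neg_four_pi_sq_le {V : Type*} [NormedAddCommGroup V] {t : ℝ} (ht : 0 ≤ t)
    (ξ : V) :
    (1 - rexp (-4 * π ^ 2 * t * ‖ξ‖ ^ 2)) ^ 2 ≤ 2 * π * √t * (1 + ‖ξ‖ ^ 2) ^ (1 / 2 : ℝ) := by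
  have hξ : ‖ξ‖ ≤ (1 + ‖ξ‖ ^ 2) ^ (1 / 2 : ℝ) := by
    rw [← sqrt_eq_rpow]; exact le_sqrt_of_sq_le (by linarith)
  calc (1 - rexp (-4 * π ^ 2 * t * ‖ξ‖ ^ 2)) ^ 2 ≤ √(4 * π ^ 2 * t * ‖ξ‖ ^ 2) := by
        simpa only [neg_mul] using
          sq_one_sub_exp_neg_le_sqrt (s := 4 * π ^ 2 * t * ‖ξ‖ ^ 2) (by positivity)
    _ = 2 * π * √t * ‖ξ‖ := by
        rw [show 4 * π ^ 2 * t * ‖ξ‖ ^ 2 = (2 * π * ‖ξ‖) ^ 2 * t by ring, sqrt_mul (by positivity),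
          sqrt_sq (by positivity)]
        ring
    _ ≤ 2 * π * √t * (1 + ‖ξ‖ ^ 2) ^ (1 / 2 : ℝ) := by gcongr

section Mollification

open Convolution ContinuousLinearMap

variable {V : Type*} [NormedAddCommGroup V] [InnerProductSpace ℝ V] [FiniteDimensional ℝ V]
  [MeasurableSpace V] [BorelSpace V]
  {H : Type*} [NormedAddCommGroup H] [InnerProductSpace ℂ H] [CompleteSpace H]

theorem lintegral_enorm_sub_heatKernel_convolution_sq_le {t : ℝ} (ht : 0 < t) {f : V → H}
    (hc : Continuous f) (hf : Integrable f) (hf' : Integrable (𝓕 f))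
    (hw : Integrable fun ξ ↦ (1 + ‖ξ‖ ^ 2) ^ (1 / 2 : ℝ) * ‖𝓕 f ξ‖ ^ 2) :
    ∫⁻ x, ‖f x - (heatKernel t ⋆[lsmul ℝ ℝ] f) x‖ₑ ^ 2 ≤
      ENNReal.ofReal (2 * π * √t * ∫ ξ, (1 + ‖ξ‖ ^ 2) ^ (1 / 2 : ℝ) * ‖𝓕 f ξ‖ ^ 2) := by
  set μ : V → ℝ := fun ξ ↦ 1 - rexp (-4 * π ^ 2 * t * ‖ξ‖ ^ 2)
  have hKf : Integrable (heatKernel t ⋆[lsmul ℝ ℝ] f) :=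
    (integrable_heatKernel ht).integrable_convolution _ hf
  have hbdd : BddAbove (Set.range fun x ↦ ‖f x‖) :=
    ⟨_, by rintro _ ⟨x, rfl⟩; exact norm_le_integral_norm_fourier hc hf hf' x⟩
  have hg_cont : Continuous (f - heatKernel t ⋆[lsmul ℝ ℝ] f) :=
    hc.sub (hbdd.continuous_convolution_right_of_integrable _ (integrable_heatKernel ht) hc)
  have hFg : 𝓕 (f - heatKernel t ⋆[lsmul ℝ ℝ] f) = μ • 𝓕 f := by
    ext ξ
    rw [Real.fourier_sub hf hKf, fourier_heatKernel_convolution ht hf, Pi.smul_apply', sub_smul,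
      one_smul]
  have hμ_cont : Continuous μ := by fun_prop
  have hμ_bdd : ∀ ξ, ‖μ ξ‖ ≤ 1 := fun ξ ↦ by
    have hs : 0 ≤ 4 * π ^ 2 * t * ‖ξ‖ ^ 2 := by positivity
    have : rexp (-4 * π ^ 2 * t * ‖ξ‖ ^ 2) ≤ 1 := exp_le_one_iff.mpr (by linarith)
    rw [norm_of_nonneg (by linarith)]
    linarith [exp_pos (-4 * π ^ 2 * t * ‖ξ‖ ^ 2)]
  have hFg_int : Integrable (𝓕 (f - heatKernel t ⋆[lsmul ℝ ℝ] f)) := by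
    rw [hFg]; exact hf'.bdd_smul 1 hμ_cont.aestronglyMeasurable (.of_forall hμ_bdd)
  have hpt : ∀ ξ, ‖𝓕 (f - heatKernel t ⋆[lsmul ℝ ℝ] f) ξ‖ ^ 2 ≤
      2 * π * √t * ((1 + ‖ξ‖ ^ 2) ^ (1 / 2 : ℝ) * ‖𝓕 f ξ‖ ^ 2) := fun ξ ↦ by
    rw [hFg, Pi.smul_apply', norm_smul, mul_pow, ← mul_assoc, norm_eq_abs, sq_abs]
    exact mul_le_mul_of_nonneg_right (sq_one_sub_exp_neg_four_pi_sq_le ht.le ξ) (sq_nonneg _)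
  rw [← integral_const_mul]
  calc ∫⁻ x, ‖f x - (heatKernel t ⋆[lsmul ℝ ℝ] f) x‖ₑ ^ 2
      = ENNReal.ofReal (∫ ξ, ‖𝓕 (f - heatKernel t ⋆[lsmul ℝ ℝ] f) ξ‖ ^ 2) :=
        lintegral_enorm_sq_eq_integral_norm_sq_fourier hg_cont (hf.sub hKf) hFg_int
    _ ≤ _ := ENNReal.ofReal_le_ofReal <|
        integral_mono_of_nonneg (.of_forall fun ξ ↦ by positivity) (hw.const_mul _)
          (.of_forall hpt)

end Mollification

theorem SchwartzMap.integrable_rpow_one_add_norm_sq_mul_norm_sq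
    {V : Type*} [NormedAddCommGroup V] [InnerProductSpace ℝ V] [FiniteDimensional ℝ V]
    [MeasurableSpace V] [BorelSpace V] {F : Type*} [NormedAddCommGroup F] [NormedSpace ℝ F]
    (ψ : SchwartzMap V F) :
    Integrable fun ξ : V ↦ (1 + ‖ξ‖ ^ 2) ^ (1 / 2 : ℝ) * ‖ψ ξ‖ ^ 2 := by
  have hcont : Continuous fun ξ : V ↦ (1 + ‖ξ‖ ^ 2) ^ (1 / 2 : ℝ) * ‖ψ ξ‖ ^ 2 :=
    ((continuous_const.add (continuous_norm.pow 2)).rpow_const fun _ ↦ Or.inr (by norm_num)).mul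
      (ψ.continuous.norm.pow 2)
  refine ((ψ.integrable.norm.add (ψ.integrable_pow_mul volume 1)).const_mul
    (SchwartzMap.seminorm ℝ 0 0 ψ)).mono' hcont.aestronglyMeasurable (.of_forall fun ξ ↦ ?_)
  have hweight : (1 + ‖ξ‖ ^ 2) ^ (1 / 2 : ℝ) ≤ 1 + ‖ξ‖ := by
    rw [← sqrt_eq_rpow]; exact sqrt_le_iff.mpr ⟨by positivity, by nlinarith [norm_nonneg ξ]⟩
  rw [norm_of_nonneg (by positivity), Pi.add_apply, pow_one, sq ‖ψ ξ‖]
  calc (1 + ‖ξ‖ ^ 2) ^ (1 / 2 : ℝ) * (‖ψ ξ‖ * ‖ψ ξ‖)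
      ≤ (1 + ‖ξ‖) * (SchwartzMap.seminorm ℝ 0 0 ψ * ‖ψ ξ‖) := by
        gcongr; exact ψ.norm_le_seminorm ℝ ξ
    _ = SchwartzMap.seminorm ℝ 0 0 ψ * (‖ψ ξ‖ + ‖ξ‖ * ‖ψ ξ‖) := by ring

theorem heat_kernel_mollification_general (m : ℕ) :
    ∃ c > (0 : ℝ), ∀ (φ : SchwartzMap (EuclideanSpace ℝ (Fin m)) ℂ) (t : ℝ), 0 < t →
      ∫⁻ x : EuclideanSpace ℝ (Fin m),
          (‖φ x - MeasureTheory.convolution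
              (fun y : EuclideanSpace ℝ (Fin m) =>
                (4 * π * t) ^ (-(m : ℝ) / 2) * Real.exp (-‖y‖ ^ 2 / (4 * t)))
              (φ : EuclideanSpace ℝ (Fin m) → ℂ)
              (ContinuousLinearMap.lsmul ℝ ℝ : ℝ →L[ℝ] ℂ →L[ℝ] ℂ) volume x‖₊ : ℝ≥0∞) ^ 2
        ≤ ENNReal.ofReal (c ^ 2 * Real.sqrt t *
            ∫ k : EuclideanSpace ℝ (Fin m),
              (1 + ‖k‖ ^ 2) ^ ((1 : ℝ) / 2) *
                ‖𝓕 (φ : EuclideanSpace ℝ (Fin m) → ℂ) k‖ ^ 2) := by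
  refine ⟨√(2 * π), by positivity, fun φ t ht ↦ ?_⟩
  have hK : (fun y : EuclideanSpace ℝ (Fin m) ↦
      (4 * π * t) ^ (-(m : ℝ) / 2) * rexp (-‖y‖ ^ 2 / (4 * t))) = heatKernel t := by
    ext y; simp [heatKernel]
  rw [hK, sq_sqrt (by positivity)]
  exact lintegral_enorm_sub_heatKernel_convolution_sq_le ht φ.continuous φ.integrable
    (𝓕 φ).integrable (𝓕 φ).integrable_rpow_one_add_norm_sq_mul_norm_sq

/-- heat-kernel mollification estimate on `H^{1/2}(ℝ^m)`. There is a
constant `c > 0` such that for every Schwartz function `φ : ℝ^m → ℂ` and every `t > 0`,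
`‖φ − φ_t * φ‖²_{L²} ≤ c²·√t·∫ (1+|k|²)^{1/2}|𝓕φ(k)|² dk`, where
`φ_t(x) = (4πt)^{−m/2} e^{−|x|²/(4t)}` is the heat kernel and `*` is convolution. -/
theorem heat_kernel_mollification (m : ℕ) (hm : 1 ≤ m) :
    ∃ c > (0 : ℝ), ∀ (φ : SchwartzMap (EuclideanSpace ℝ (Fin m)) ℂ) (t : ℝ), 0 < t →
      ∫⁻ x : EuclideanSpace ℝ (Fin m),
          (‖φ x - MeasureTheory.convolution
              (fun y : EuclideanSpace ℝ (Fin m) =>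
                (4 * π * t) ^ (-(m : ℝ) / 2) * Real.exp (-‖y‖ ^ 2 / (4 * t)))
              (φ : EuclideanSpace ℝ (Fin m) → ℂ)
              (ContinuousLinearMap.lsmul ℝ ℝ : ℝ →L[ℝ] ℂ →L[ℝ] ℂ) volume x‖₊ : ℝ≥0∞) ^ 2
        ≤ ENNReal.ofReal (c ^ 2 * Real.sqrt t *
            ∫ k : EuclideanSpace ℝ (Fin m),
              (1 + ‖k‖ ^ 2) ^ ((1 : ℝ) / 2) *
                ‖𝓕 (φ : EuclideanSpace ℝ (Fin m) → ℂ) k‖ ^ 2) :=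
  heat_kernel_mollification_general m
end
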